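/- arXiv:1504.05662 — 11 statements merged into one kernel-verified Lean document; each statement's English description precedes it below -/
import Mathlib

section
/- If an ℓ×k matrix A over a finite field F_q generates a linear code of length k, dimension ℓ, and minimum distance at least 2, then for every nonempty subset J of the row indices [ℓ], the union of the supports of the rows of A indexed by J has cardinality at least |J| + 1. -/
/-!
The rows indexed by `J` span a `|J|`-dimensional subspace of the row space, all of whose vectors
vanish outside `S`, the union of the supports of these rows. If `|S| ≤ |J|`, this subspace is the
whole coordinate subspace of `S`, so it contains a standard basis vector `e_s` with `s ∈ S`: a
codeword of weight one, contradicting minimum distance at least two.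
-/

open Finset Matrix Module Submodule

variable {ι K : Type*} [Field K] [Fintype ι]

variable (K) in
def coordSubspace (S : Finset ι) : Submodule K (ι → K) :=
  span K (Pi.basisFun K ι '' S)

theorem mem_coordSubspace {S : Finset ι} {v : ι → K} :
    v ∈ coordSubspace K S ↔ ∀ j, v j ≠ 0 → j ∈ S := by
  simp only [coordSubspace, Basis.mem_span_image, Pi.basisFun_repr, Set.subset_def,
    Finsupp.mem_support_iff, mem_coe]

theorem finrank_coordSubspace (S : Finset ι) : finrank K (coordSubspace K S) = S.card := by
  have hind := (Pi.basisFun K ι).linearIndependent.comp _ (Subtype.val_injective (p := (· ∈ S)))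
  rw [coordSubspace, Set.image_eq_range]
  exact (finrank_span_eq_card hind).trans (Fintype.card_coe S)

theorem finrank_lt_card_of_le_coordSubspace [DecidableEq ι]
    {W : Submodule K (ι → K)} {S : Finset ι}
    (hWS : W ≤ coordSubspace K S) (hS : S.Nonempty) (hW : ∀ j, Pi.single j 1 ∉ W) :
    finrank K W < S.card := by
  by_contra! hle
  obtain ⟨s, hs⟩ := hS
  rw [← finrank_coordSubspace (K := K)] at hle
  refine hW s ((eq_of_le_of_finrank_le hWS hle).symm ▸ ?_)
  exact mem_coordSubspace.2 fun j hj => (by simpa [Pi.single_apply] using hj : j = s) ▸ hs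

theorem hammingNorm_single_one [DecidableEq ι] [DecidableEq K] (j : ι) :
    hammingNorm (Pi.single j 1 : ι → K) = 1 := by
  simp [hammingNorm, Pi.single_apply, Finset.filter_eq']

theorem single_one_notMem_range_vecMulLinear [DecidableEq ι] [DecidableEq K]
    {m : Type*} [Fintype m] (A : Matrix m ι K)
    (hdist : ∀ x : m → K, x ≠ 0 → 2 ≤ hammingNorm (vecMul x A)) (j : ι) :
    Pi.single j 1 ∉ LinearMap.range A.vecMulLinear := by
  rintro ⟨x, hx⟩
  have hx0 : x ≠ 0 := by
    rintro rfl
    simpa using congrFun hx j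
  have := hdist x hx0
  rw [← vecMulLinear_apply, hx, hammingNorm_single_one] at this
  omega

theorem stmt1_general {ℓ k : ℕ} {F : Type} [Field F] [DecidableEq F]
    (A : Matrix (Fin ℓ) (Fin k) F)
    (hind : LinearIndependent F (fun i : Fin ℓ => A i))
    (hdist : ∀ x : Fin ℓ → F, x ≠ 0 →
        2 ≤ (Finset.univ.filter (fun j => Matrix.vecMul x A j ≠ 0)).card) :
    ∀ J : Finset (Fin ℓ), J.Nonempty →
      J.card + 1 ≤ (J.biUnion (fun i => Finset.univ.filter (fun j => A i j ≠ 0))).card := by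
  intro J hJ
  set S := J.biUnion (fun i => Finset.univ.filter (fun j => A i j ≠ 0))
  set W := span F (Set.range fun i : J => A i)
  have hdim : finrank F W = J.card := by
    rw [← Fintype.card_coe]
    exact finrank_span_eq_card (hind.comp _ Subtype.val_injective)
  have hWS : W ≤ coordSubspace F S := span_le.2 <| Set.range_subset_iff.2 fun i =>
    mem_coordSubspace.2 fun j hj => mem_biUnion.2 ⟨i, i.2, by simpa using hj⟩
  have hWcode : W ≤ LinearMap.range A.vecMulLinear := by
    rw [range_vecMulLinear]
    exact span_mono (Set.range_subset_iff.2 fun i => ⟨i, rfl⟩)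
  have hS : S.Nonempty := by
    obtain ⟨i, hi⟩ := hJ
    obtain ⟨j, hj⟩ := Function.ne_iff.1 (hind.ne_zero i)
    exact ⟨j, mem_biUnion.2 ⟨i, hi, by simpa using hj⟩⟩
  have := finrank_lt_card_of_le_coordSubspace hWS hS fun j hj =>
    single_one_notMem_range_vecMulLinear A hdist j (hWcode hj)
  omega

/-- If an ℓ×k matrix A generates an [k,ℓ,≥2] code, then for every nonempty
set J of rows, the union of the supports of those rows has cardinality ≥ |J| + 1. -/
theorem stmt1 {ℓ k : ℕ} {F : Type} [Field F] [Fintype F] [DecidableEq F]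
    (A : Matrix (Fin ℓ) (Fin k) F)
    (hind : LinearIndependent F (fun i : Fin ℓ => A i))
    (hdist : ∀ x : Fin ℓ → F, x ≠ 0 →
        2 ≤ (Finset.univ.filter (fun j => Matrix.vecMul x A j ≠ 0)).card) :
    ∀ J : Finset (Fin ℓ), J.Nonempty →
      J.card + 1 ≤ (J.biUnion (fun i => Finset.univ.filter (fun j => A i j ≠ 0))).card :=
  stmt1_general A hind hdist
end

section
/- If an ℓ×k matrix A over a finite field F_q generates a linear code of length k, dimension ℓ, and minimum distance at least d', then for every nonempty subset J of the row indices [ℓ], the union of the supports of the rows of A indexed by J has cardinality at least |J| + d' − 1. -/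
open Finset Matrix Module

/-!
The rows indexed by `J` span a code `C` of dimension `|J|` all of whose words are supported in
the union `S` of their supports. Fix `T ⊆ S` with `|T| = d' - 1`. A nonzero word of `C` has
weight at least `d'`, so it cannot vanish on `S \ T`; hence restriction to `S \ T` is injective on
`C`, and `|J| ≤ |S| - (d' - 1)`. This is the Singleton bound, applied inside `S`.
-/

theorem apply_eq_zero_of_mem_span_of_notMem_biUnion {R ι κ : Type*} [Semiring R] [Fintype ι]
    [DecidableEq R] [DecidableEq ι] (v : κ → ι → R) (J : Finset κ) {c : ι → R}
    (hc : c ∈ Submodule.span R (Set.range fun a : J => v a))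
    {i : ι} (hi : i ∉ J.biUnion fun a => {j | v a j ≠ 0}) : c i = 0 := by
  induction hc using Submodule.span_induction with
  | mem x hx =>
    obtain ⟨a, rfl⟩ := hx
    by_contra h
    exact hi (mem_biUnion.2 ⟨a, a.2, mem_filter.2 ⟨mem_univ i, h⟩⟩)
  | zero => rfl
  | add x y _ _ hx hy => simp [hx, hy]
  | smul r x _ hx => simp [hx]

namespace Submodule

variable {K ι : Type*} [DivisionRing K] [Fintype ι]

theorem finrank_le_card_of_forall_exists_ne_zero (C : Submodule K (ι → K))
    (s : Finset ι) (h : ∀ c ∈ C, c ≠ 0 → ∃ i ∈ s, c i ≠ 0) : finrank K C ≤ s.card := by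
  let restrict : C →ₗ[K] (s → K) := (LinearMap.funLeft K K ((↑) : s → ι)).comp C.subtype
  have hinj : Function.Injective restrict := by
    rw [← LinearMap.ker_eq_bot, LinearMap.ker_eq_bot']
    intro c hc
    by_contra hne
    obtain ⟨i, hi, hci⟩ := h c c.2 (by simpa using hne)
    exact hci (congrFun hc ⟨i, hi⟩)
  simpa using restrict.finrank_le_finrank_of_injective hinj

theorem finrank_add_sub_one_le_card_of_le_hammingNorm [DecidableEq K] (C : Submodule K (ι → K))
    (S : Finset ι) (hS : ∀ c ∈ C, ∀ i ∉ S, c i = 0) {d : ℕ}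
    (hd : ∀ c ∈ C, c ≠ 0 → d ≤ hammingNorm c) (hC : C ≠ ⊥) :
    finrank K C + d - 1 ≤ S.card := by
  classical
  have hsupp : ∀ c ∈ C, ({i | c i ≠ 0} : Finset ι) ⊆ S := fun c hc i hi => by
    by_contra hiS
    exact (mem_filter.1 hi).2 (hS c hc i hiS)
  obtain ⟨c₀, hc₀, hc₀0⟩ := exists_mem_ne_zero_of_ne_bot hC
  obtain ⟨T, hTS, hT⟩ := exists_subset_card_eq
    ((Nat.sub_le d 1).trans ((hd c₀ hc₀ hc₀0).trans (card_le_card (hsupp c₀ hc₀))))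
  have hrestrict : ∀ c ∈ C, c ≠ 0 → ∃ i ∈ S \ T, c i ≠ 0 := by
    intro c hc hc0
    by_contra! hcT
    have hsub : ({i | c i ≠ 0} : Finset ι) ⊆ T := fun i hi => by
      by_contra hiT
      exact (mem_filter.1 hi).2 (hcT i (mem_sdiff.2 ⟨hsupp c hc hi, hiT⟩))
    have hpos := hammingNorm_pos_iff.2 hc0
    have hweight := hd c hc hc0
    have hsubcard := card_le_card hsub
    simp only [hammingNorm] at hpos hweight
    omega
  have hrank := C.finrank_le_card_of_forall_exists_ne_zero _ hrestrict
  rw [card_sdiff_of_subset hTS] at hrank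
  have hTcard := card_le_card hTS
  omega

end Submodule

theorem stmt2_general {ℓ k d' : ℕ} {F : Type} [Field F] [DecidableEq F]
    (A : Matrix (Fin ℓ) (Fin k) F)
    (hind : LinearIndependent F (fun i : Fin ℓ => A i))
    (hdist : ∀ x : Fin ℓ → F, x ≠ 0 →
        d' ≤ (Finset.univ.filter (fun j => Matrix.vecMul x A j ≠ 0)).card) :
    ∀ J : Finset (Fin ℓ), J.Nonempty →
      J.card + d' - 1 ≤ (J.biUnion (fun i => Finset.univ.filter (fun j => A i j ≠ 0))).card := by
  intro J hJ
  set C := Submodule.span F (Set.range fun i : J => A i)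
  have hrank : finrank F C = J.card :=
    (finrank_span_eq_card (hind.comp _ Subtype.val_injective)).trans (Fintype.card_coe J)
  have hC : C ≠ ⊥ := by
    rw [Ne, ← Submodule.finrank_eq_zero, hrank]
    exact hJ.card_ne_zero
  have hweight : ∀ c ∈ C, c ≠ 0 → d' ≤ hammingNorm c := by
    intro c hc hc0
    have hcode : c ∈ LinearMap.range A.vecMulLinear := by
      rw [range_vecMulLinear]
      exact Submodule.span_mono (by rintro _ ⟨i, rfl⟩; exact ⟨i, rfl⟩) hc
    obtain ⟨x, rfl⟩ := hcode
    exact hdist x (by rintro rfl; simp at hc0)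
  simpa [hrank] using C.finrank_add_sub_one_le_card_of_le_hammingNorm _
    (fun c hc j hj => apply_eq_zero_of_mem_span_of_notMem_biUnion A J hc hj) hweight hC

/-- If an ℓ×k matrix A generates a code of minimum distance ≥ d', then for
every nonempty set J of rows, the union of supports has cardinality ≥ |J| + d' − 1. -/
theorem stmt2 {ℓ k d' : ℕ} {F : Type} [Field F] [Fintype F] [DecidableEq F]
    (hd' : 1 ≤ d')
    (A : Matrix (Fin ℓ) (Fin k) F)
    (hind : LinearIndependent F (fun i : Fin ℓ => A i))
    (hdist : ∀ x : Fin ℓ → F, x ≠ 0 →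
        d' ≤ (Finset.univ.filter (fun j => Matrix.vecMul x A j ≠ 0)).card) :
    ∀ J : Finset (Fin ℓ), J.Nonempty →
      J.card + d' - 1 ≤ (J.biUnion (fun i => Finset.univ.filter (fun j => A i j ≠ 0))).card :=
  stmt2_general A hind hdist
end

section
/- Let M be a k×n binary (0-1) matrix with n ≥ k. The column condition '|∪_{j∈J} supp(M[j])| ≥ |J| + 1 for every nonempty subset J of columns with |J| ≤ k−1' holds if and only if the row condition '|∪_{i∈I} supp(M_i)| ≥ n − k + |I| + 1 for every nonempty proper subset I of [k]' holds. -/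
/-!
Both conditions say that `M` has no large zero block: no zero submatrix `I × J` with `I` a
nonempty proper set of rows, `J` a nonempty set of columns and `|I| + |J| ≥ k`, the number of rows. A column set `J`
violating the column condition leaves the rows outside its support free, and these contain a zero
block of size exactly `k` together with `J`; a row set `I` violating the row condition forms such
a block with the columns outside its support. Conversely a large zero block can be shrunk to a
violation of either condition.
-/

open Finset Matrix

section ZeroBlocks

variable {α β : Type*}

/-- The union of the supports of the columns in `J`; the union of the supports of a set of rows
`I` is `colSupport Mᵀ I`. -/
def colSupport [Fintype α] [DecidableEq α] (M : Matrix α β Bool) (J : Finset β) : Finset α :=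
  J.biUnion fun j => univ.filter fun i => M i j = true

def IsZeroBlock (M : Matrix α β Bool) (I : Finset α) (J : Finset β) : Prop :=
  ∀ i ∈ I, ∀ j ∈ J, M i j = false

theorem disjoint_colSupport_iff [Fintype α] [DecidableEq α] {M : Matrix α β Bool}
    {I : Finset α} {J : Finset β} :
    Disjoint (colSupport M J) I ↔ IsZeroBlock M I J := by
  simp only [colSupport, IsZeroBlock, disjoint_left, mem_biUnion, mem_filter, mem_univ, true_and]
  grind

theorem isZeroBlock_transpose {M : Matrix α β Bool} {I : Finset α} {J : Finset β} :
    IsZeroBlock Mᵀ J I ↔ IsZeroBlock M I J :=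
  forall₂_comm

theorem IsZeroBlock.mono_right {M : Matrix α β Bool} {I : Finset α} {J J' : Finset β}
    (h : IsZeroBlock M I J) (hJ' : J' ⊆ J) : IsZeroBlock M I J' :=
  fun i hi j hj => h i hi j (hJ' hj)

def NoLargeZeroBlock [Fintype α] (M : Matrix α β Bool) : Prop :=
  ∀ (I : Finset α) (J : Finset β), I.Nonempty → I ≠ univ → J.Nonempty → IsZeroBlock M I J →
    #I + #J < Fintype.card α

theorem colCondition_iff_noLargeZeroBlock [Fintype α] [DecidableEq α] (M : Matrix α β Bool) :
    (∀ J : Finset β, J.Nonempty → #J ≤ Fintype.card α - 1 → #J + 1 ≤ #(colSupport M J)) ↔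
      NoLargeZeroBlock M := by
  constructor
  · intro hcol I J hI hIuniv hJ hzero
    by_contra! hlarge
    have hIpos := hI.card_pos
    have hIlt : #I < Fintype.card α := (card_lt_iff_ne_univ I).mpr hIuniv
    obtain ⟨J', hJ'J, hJ'card⟩ := exists_subset_card_eq (s := J) (n := Fintype.card α - #I)
      (by omega)
    have hdisj : Disjoint (colSupport M J') I :=
      disjoint_colSupport_iff.mpr (hzero.mono_right hJ'J)
    have hsupp : #(colSupport M J') ≤ Fintype.card α - #I := by
      rw [← card_compl]
      exact card_le_card (subset_compl_iff_disjoint_right.mpr hdisj)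
    have := hcol J' (card_pos.mp (by omega)) (by omega)
    omega
  · intro hblock J hJ hJcard
    by_contra! hsmall
    have hcompl : #(colSupport M J)ᶜ = Fintype.card α - #(colSupport M J) := card_compl _
    obtain ⟨I, hIS, hIcard⟩ := exists_subset_card_eq (s := (colSupport M J)ᶜ)
      (n := Fintype.card α - #J) (by omega)
    have hJpos := hJ.card_pos
    have hzero : IsZeroBlock M I J :=
      disjoint_colSupport_iff.mp (subset_compl_iff_disjoint_right.mp hIS).symm
    have hIuniv : I ≠ univ := fun h => by
      rw [h, card_univ] at hIcard
      omega
    have := hblock I J (card_pos.mp (by omega)) hIuniv hJ hzero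
    omega

theorem rowCondition_iff_noLargeZeroBlock [Fintype α] [Fintype β] [DecidableEq β]
    (M : Matrix α β Bool) (hcard : Fintype.card α ≤ Fintype.card β) :
    (∀ I : Finset α, I.Nonempty → I ≠ univ →
        Fintype.card β - Fintype.card α + #I + 1 ≤ #(colSupport Mᵀ I)) ↔
      NoLargeZeroBlock M := by
  have hcompl (I : Finset α) : #(colSupport Mᵀ I)ᶜ = Fintype.card β - #(colSupport Mᵀ I) :=
    card_compl _
  have hle (I : Finset α) : #(colSupport Mᵀ I) ≤ Fintype.card β := card_le_univ _
  constructor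
  · intro hrow I J hI hIuniv _ hzero
    have hJ : J ⊆ (colSupport Mᵀ I)ᶜ :=
      subset_compl_iff_disjoint_right.mpr
        (disjoint_colSupport_iff.mpr (isZeroBlock_transpose.mpr hzero)).symm
    have := card_le_card hJ
    have := hrow I hI hIuniv
    grind
  · intro hblock I hI hIuniv
    have hzero : IsZeroBlock M I (colSupport Mᵀ I)ᶜ :=
      isZeroBlock_transpose.mp (disjoint_colSupport_iff.mp disjoint_compl_right)
    have hsum : #I + #(colSupport Mᵀ I)ᶜ < Fintype.card α := by
      rcases (colSupport Mᵀ I)ᶜ.eq_empty_or_nonempty with hJ | hJ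
      · simpa [hJ] using (card_lt_iff_ne_univ I).mpr hIuniv
      · exact hblock I _ hI hIuniv hJ hzero
    grind

end ZeroBlocks

/-- Equivalence of the column form and row form of the Weak Security
Condition for a k×n binary matrix M with n ≥ k. -/
theorem stmt3 {k n : ℕ} (hkn : k ≤ n) (M : Matrix (Fin k) (Fin n) Bool) :
    (∀ J : Finset (Fin n), J.Nonempty → J.card ≤ k - 1 →
        J.card + 1 ≤ (J.biUnion (fun j => Finset.univ.filter (fun i => M i j = true))).card) ↔
    (∀ I : Finset (Fin k), I.Nonempty → I ≠ Finset.univ →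
        n - k + I.card + 1 ≤
          (I.biUnion (fun i => Finset.univ.filter (fun j => M i j = true))).card) := by
  have h := (colCondition_iff_noLargeZeroBlock M).trans
    (rowCondition_iff_noLargeZeroBlock M (by simpa using hkn)).symm
  rw [Fintype.card_fin, Fintype.card_fin] at h
  exact h
end

section
/- Let P be a (k−1)×k binary matrix and let var(P) be the matrix of independent indeterminates obtained by replacing each 1-entry of P with a distinct variable ξ_{i,j} and keeping 0-entries as 0. Let f(var(P)) be the product of the determinants of all k maximal ((k−1)×(k−1)) square submatrices of var(P). Then f(var(P)) is not the identically zero polynomial if and only if for every nonempty subset J ⊆ [k−1] of rows, |∪_{j∈J} supp(P_j)| ≥ |J| + 1. -/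
/-!
A nonzero determinant has a nonzero term in its Leibniz expansion, i.e. a perfect matching of rows
to columns inside the support; conversely, evaluating the variables at the indicator of such a
matching gives `±1`. By Hall's theorem the maximal minor without column `j₀` is therefore nonzero
iff every set `J` of rows meets at least `|J|` columns other than `j₀`. Removing `j₀` shrinks
`∪_{j∈J} supp(P_j)` by at most one, and by exactly one when `j₀` lies in it, so these conditions
for all `j₀` together say `|∪_{j∈J} supp(P_j)| ≥ |J| + 1`.
-/

open Finset Matrix MvPolynomial Equiv

/-- The matrix `var(S)`. -/
noncomputable def genericMatrix {m n : Type*} (R : Type*) [CommSemiring R] (S : Matrix m n Bool) :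
    Matrix m n (MvPolynomial (m × n) R) :=
  of fun i j => if S i j then X (i, j) else 0

section GenericMatrix

variable {m n R : Type*} [Fintype m] [DecidableEq m] [CommRing R]

theorem exists_perm_of_det_genericMatrix_submatrix_ne_zero (S : Matrix m n Bool) (e : m → n)
    (h : ((genericMatrix R S).submatrix id e).det ≠ 0) :
    ∃ σ : Perm m, ∀ i, S i (e (σ i)) = true := by
  rw [det_apply] at h
  obtain ⟨σ, -, hσ⟩ := exists_ne_zero_of_sum_ne_zero h
  refine ⟨σ.symm, fun i => ?_⟩
  by_contra hS
  apply hσ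
  rw [prod_eq_zero (mem_univ (σ.symm i))]
  · exact smul_zero _
  · simp [genericMatrix, hS]

theorem det_genericMatrix_submatrix_ne_zero [Nontrivial R] (S : Matrix m n Bool) {e : m → n}
    (he : Function.Injective e) (σ : Perm m) (hσ : ∀ i, S i (e (σ i)) = true) :
    ((genericMatrix R S).submatrix id e).det ≠ 0 := by
  classical
  let x : m × n → R := fun p => if p.2 = e (σ p.1) then 1 else 0
  have heval : (eval x).mapMatrix ((genericMatrix R S).submatrix id e) = σ.permMatrix R := by
    ext i j
    by_cases hij : σ i = j
    · subst hij
      simp [genericMatrix, x, hσ i]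
    · have : e j ≠ e (σ i) := he.ne (Ne.symm hij)
      simp [genericMatrix, x, hij, this, apply_ite (eval x)]
  intro h
  have := congrArg (eval x) h
  rw [RingHom.map_det, heval, det_permutation, map_zero] at this
  rcases Int.units_eq_one_or (Perm.sign σ) with hsign | hsign <;> simp [hsign] at this

theorem det_genericMatrix_submatrix_ne_zero_iff [Nontrivial R] (S : Matrix m n Bool) {e : m → n}
    (he : Function.Injective e) :
    ((genericMatrix R S).submatrix id e).det ≠ 0 ↔ ∃ σ : Perm m, ∀ i, S i (e (σ i)) = true :=
  ⟨exists_perm_of_det_genericMatrix_submatrix_ne_zero S e,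
    fun ⟨σ, hσ⟩ => det_genericMatrix_submatrix_ne_zero S he σ hσ⟩

end GenericMatrix

theorem exists_perm_forall_mem_iff_all_card_le_biUnion_card {ι : Type*} [Fintype ι]
    [DecidableEq ι] (t : ι → Finset ι) :
    (∃ σ : Perm ι, ∀ i, σ i ∈ t i) ↔ ∀ s : Finset ι, #s ≤ #(s.biUnion t) := by
  rw [all_card_le_biUnion_card_iff_existsInjective']
  constructor
  · rintro ⟨σ, hσ⟩
    exact ⟨σ, σ.injective, hσ⟩
  · rintro ⟨f, hf, hft⟩
    exact ⟨ofBijective f (Finite.injective_iff_bijective.mp hf), hft⟩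

theorem Fin.card_filter_succAbove_mem {n : ℕ} (p : Fin (n + 1)) (U : Finset (Fin (n + 1))) :
    #{j | p.succAbove j ∈ U} = #(U.erase p) := by
  rw [← card_map p.succAboveEmb]
  congr 1
  ext j
  simp only [mem_map, mem_filter_univ, Fin.coe_succAboveEmb, mem_erase]
  constructor
  · rintro ⟨a, ha, rfl⟩
    exact ⟨Fin.succAbove_ne p a, ha⟩
  · rintro ⟨hj, hjU⟩
    obtain ⟨a, rfl⟩ := Fin.exists_succAbove_eq hj
    exact ⟨a, hjU, rfl⟩

theorem det_genericMatrix_submatrix_succAbove_ne_zero_iff {n : ℕ} {R : Type*} [CommRing R]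
    [Nontrivial R] (P : Matrix (Fin n) (Fin (n + 1)) Bool) (p : Fin (n + 1)) :
    ((genericMatrix R P).submatrix id p.succAbove).det ≠ 0 ↔
      ∀ s : Finset (Fin n), #s ≤ #((s.biUnion fun i => {j | P i j = true}).erase p) := by
  have hsupp (s : Finset (Fin n)) :
      (s.biUnion fun i => {j | P i (p.succAbove j) = true}) =
        ({j | p.succAbove j ∈ s.biUnion fun i => {j | P i j = true}} : Finset (Fin n)) := by
    ext j
    simp only [mem_biUnion, mem_filter_univ]
  simp_rw [det_genericMatrix_submatrix_ne_zero_iff P Fin.succAbove_right_injective,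
    ← Fin.card_filter_succAbove_mem, ← hsupp,
    ← exists_perm_forall_mem_iff_all_card_le_biUnion_card, mem_filter_univ]

theorem forall_card_le_card_biUnion_erase_iff {ι α : Type*} [DecidableEq α] [Nonempty α]
    (T : ι → Finset α) :
    (∀ a : α, ∀ s : Finset ι, #s ≤ #((s.biUnion T).erase a)) ↔
      ∀ J : Finset ι, J.Nonempty → #J + 1 ≤ #(J.biUnion T) := by
  constructor
  · intro h J hJ
    obtain hempty | ⟨a, ha⟩ := (J.biUnion T).eq_empty_or_nonempty
    · have := h (Classical.arbitrary α) J
      simp [hempty, hJ.ne_empty] at this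
    · have hcard := h a J
      rw [card_erase_of_mem ha] at hcard
      have hJpos := hJ.card_pos
      omega
  · intro h a s
    obtain rfl | hs := s.eq_empty_or_nonempty
    · simp
    · have hcard := h s hs
      have herase := pred_card_le_card_erase (s := s.biUnion T) (a := a)
      omega

theorem stmt9_general {m : ℕ} {F : Type} [Field F]
    (P : Matrix (Fin m) (Fin (m + 1)) Bool) :
    (∏ j₀ : Fin (m + 1),
        Matrix.det
          (Matrix.submatrix
            (Matrix.of fun i j =>
              if P i j then (MvPolynomial.X (i, j) : MvPolynomial (Fin m × Fin (m + 1)) F)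
              else 0)
            id j₀.succAbove)) ≠ 0 ↔
    (∀ J : Finset (Fin m), J.Nonempty →
        J.card + 1 ≤ (J.biUnion (fun i => Finset.univ.filter (fun j => P i j = true))).card) := by
  rw [prod_ne_zero_iff, ← forall_card_le_card_biUnion_erase_iff]
  exact forall_congr' fun j₀ =>
    imp_iff_right (mem_univ j₀) |>.trans (det_genericMatrix_submatrix_succAbove_ne_zero_iff P j₀)

/-- For a (k−1)×k binary matrix P (here with k−1 = m rows and k = m+1
columns), the product of the determinants of all m×m maximal square submatrices of the
matrix of indeterminates var(P) is not identically zero iff every nonempty set J of rows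
satisfies |∪_{j∈J} supp(P_j)| ≥ |J| + 1. -/
theorem stmt9 {m : ℕ} {F : Type} [Field F] [Fintype F]
    (P : Matrix (Fin m) (Fin (m + 1)) Bool) :
    (∏ j₀ : Fin (m + 1),
        Matrix.det
          (Matrix.submatrix
            (Matrix.of fun i j =>
              if P i j then (MvPolynomial.X (i, j) : MvPolynomial (Fin m × Fin (m + 1)) F)
              else 0)
            id j₀.succAbove)) ≠ 0 ↔
    (∀ J : Finset (Fin m), J.Nonempty →
        J.card + 1 ≤ (J.biUnion (fun i => Finset.univ.filter (fun j => P i j = true))).card) :=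
  stmt9_general P
end

section
/- Let M be a k×n binary matrix with n ≥ k, and let var(M) be the polynomial matrix obtained by replacing each 1-entry with a distinct indeterminate. The product of the determinants of all k×k submatrices of var(M) is not identically zero if and only if |∪_{i∈I} supp(M_i)| ≥ n − k + |I| for every nonempty subset I ⊆ [k] of rows. -/
/-!
A `k × k` submatrix of `var(M)` has nonzero determinant iff some permutation is supported on `M`:
otherwise every term of the Leibniz expansion vanishes, and if `σ` is supported, specialising the
indeterminates to the entries of the permutation matrix of `σ` gives determinant `±1`. So every
such determinant is nonzero iff, for every `k`-set `S` of columns, the rows admit distinct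
representatives in `S`. By Hall's theorem this means `|I| ≤ |N_I ∩ S|` for all `I` and `S`, where
`N_I = ∪_{i ∈ I} supp(M_i)`, and the least value of `|N_I ∩ S|` over `k`-sets is `k - |N_Iᶜ|`,
attained by packing `S` into `N_Iᶜ`.
-/

open Finset Matrix

section Combinatorics

variable {α : Type*} [Fintype α] [DecidableEq α]

lemma exists_card_eq_card_inter_eq (N : Finset α) {k : ℕ} (hk : k ≤ Fintype.card α) :
    ∃ S : Finset α, #S = k ∧ #(N ∩ S) = k - #Nᶜ := by
  by_cases hkN : k ≤ #Nᶜ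
  · obtain ⟨S, hSN, hSk⟩ := exists_subset_card_eq hkN
    refine ⟨S, hSk, ?_⟩
    rw [disjoint_iff_inter_eq_empty.mp (disjoint_of_subset_right hSN disjoint_compl_right)]
    simp only [card_empty]
    omega
  · obtain ⟨S, hNS, -, hSk⟩ :=
      exists_subsuperset_card_eq (n := k) (subset_univ Nᶜ) (by omega) (by simpa using hk)
    refine ⟨S, hSk, ?_⟩
    have hsplit := card_inter_add_card_sdiff S N
    rw [sdiff_eq_inter_compl, inter_eq_right.mpr hNS, hSk] at hsplit
    rw [inter_comm]
    omega

lemma forall_card_eq_le_card_inter_iff (N : Finset α) {k c : ℕ} (hk : k ≤ Fintype.card α)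
    (hc : 0 < c) :
    (∀ S : Finset α, #S = k → c ≤ #(N ∩ S)) ↔ Fintype.card α - k + c ≤ #N := by
  have hN : #N ≤ Fintype.card α := card_le_univ N
  constructor
  · intro h
    obtain ⟨S, hSk, hNS⟩ := exists_card_eq_card_inter_eq N hk
    have := h S hSk
    rw [hNS, card_compl] at this
    omega
  · intro h S hSk
    have hunion := card_union_add_card_inter N S
    have := card_le_univ (N ∪ S)
    omega

theorem forall_card_eq_exists_injective_iff {ι : Type*} [Fintype ι] (t : ι → Finset α)
    (hk : Fintype.card ι ≤ Fintype.card α) :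
    (∀ S : Finset α, #S = Fintype.card ι →
        ∃ f : ι → α, Function.Injective f ∧ ∀ i, f i ∈ t i ∩ S) ↔
      ∀ I : Finset ι, I.Nonempty →
        Fintype.card α - Fintype.card ι + #I ≤ #(I.biUnion t) := by
  have hall (S : Finset α) :
      (∃ f : ι → α, Function.Injective f ∧ ∀ i, f i ∈ t i ∩ S) ↔
        ∀ I : Finset ι, #I ≤ #(I.biUnion t ∩ S) := by
    simp only [← all_card_le_biUnion_card_iff_exists_injective, biUnion_inter]
  simp only [hall]
  constructor
  · intro h I hI
    exact (forall_card_eq_le_card_inter_iff _ hk (card_pos.mpr hI)).mp fun S hS => h S hS I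
  · intro h S hS I
    rcases I.eq_empty_or_nonempty with rfl | hI
    · simp
    · exact (forall_card_eq_le_card_inter_iff _ hk (card_pos.mpr hI)).mpr (h I hI) S hS

end Combinatorics

section VarMatrix

variable {m n : Type*} (R : Type*) [CommRing R]

noncomputable def varMatrix (M : Matrix m n Bool) : Matrix m n (MvPolynomial (m × n) R) :=
  of fun i j => if M i j then MvPolynomial.X (i, j) else 0

variable {R} [Fintype m] [DecidableEq m]

theorem det_submatrix_varMatrix_ne_zero_iff [Nontrivial R] (M : Matrix m n Bool) {c : m → n}
    (hc : Function.Injective c) :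
    det ((varMatrix R M).submatrix id c) ≠ 0 ↔ ∃ σ : Equiv.Perm m, ∀ i, M i (c (σ i)) = true := by
  classical
  constructor
  · intro hdet
    by_contra! hσ
    rw [det_apply] at hdet
    refine hdet (sum_eq_zero fun σ _ => ?_)
    obtain ⟨i, hi⟩ := hσ σ⁻¹
    rw [prod_eq_zero (mem_univ (σ⁻¹ i)), smul_zero]
    rw [ne_eq, Bool.not_eq_true, Equiv.Perm.inv_def] at hi
    simp [varMatrix, hi]
  · rintro ⟨σ, hσ⟩ hdet
    let x : m × n → R := fun p => if c (σ p.1) = p.2 then 1 else 0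
    have hx : ((varMatrix R M).submatrix id c).map (MvPolynomial.eval x) = σ.permMatrix R := by
      ext i j
      by_cases hij : σ i = j
      · subst hij
        simp [varMatrix, x, hσ i, PEquiv.toMatrix_apply]
      · have hcij : c (σ i) ≠ c j := hc.ne hij
        simp [varMatrix, x, apply_ite, hcij, hij, PEquiv.toMatrix_apply]
    have := congrArg (MvPolynomial.eval x) hdet
    rw [RingHom.map_det, map_zero, RingHom.mapMatrix_apply, hx, det_permutation] at this
    exact ((Equiv.Perm.sign σ).isUnit.map (Int.castRingHom R)).ne_zero this

end VarMatrix

lemma exists_perm_comp_equiv_iff {m n : Type*} [Finite m] {S : Finset n} (e : m ≃ S)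
    (p : m → n → Prop) :
    (∃ σ : Equiv.Perm m, ∀ i, p i (e (σ i))) ↔
      ∃ f : m → n, Function.Injective f ∧ ∀ i, f i ∈ S ∧ p i (f i) := by
  constructor
  · rintro ⟨σ, hσ⟩
    exact ⟨fun i => e (σ i), Subtype.val_injective.comp (e.injective.comp σ.injective),
      fun i => ⟨(e (σ i)).2, hσ i⟩⟩
  · rintro ⟨f, hf, hfS⟩
    let g : m → m := fun i => e.symm ⟨f i, (hfS i).1⟩
    have hg : Function.Injective g := fun a b hab =>
      hf (congrArg Subtype.val (e.symm.injective hab))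
    refine ⟨Equiv.ofBijective g (Finite.injective_iff_bijective.mp hg), fun i => ?_⟩
    simpa [g] using (hfS i).2

theorem stmt10_general {k n : ℕ} (hkn : k ≤ n) {F : Type} [Field F]
    (M : Matrix (Fin k) (Fin n) Bool) :
    (∏ S ∈ (Finset.univ.filter (fun S : Finset (Fin n) => S.card = k)).attach,
        Matrix.det
          (Matrix.submatrix
            (Matrix.of fun i j =>
              if M i j then (MvPolynomial.X (i, j) : MvPolynomial (Fin k × Fin n) F) else 0)
            id
            (fun i : Fin k =>
              ((S.1.orderIsoOfFin (Finset.mem_filter.mp S.2).2 i : {x // x ∈ S.1}) : Fin n)))) ≠ 0 ↔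
    (∀ I : Finset (Fin k), I.Nonempty →
        n - k + I.card ≤
          (I.biUnion (fun i => Finset.univ.filter (fun j => M i j = true))).card) := by
  have hdet (S : Finset (Fin n)) (hS : #S = k) :
      det ((varMatrix F M).submatrix id fun i => (S.orderIsoOfFin hS i : Fin n)) ≠ 0 ↔
        ∃ f : Fin k → Fin n, Function.Injective f ∧
          ∀ i, f i ∈ univ.filter (fun j => M i j = true) ∩ S :=
    (det_submatrix_varMatrix_ne_zero_iff M
      (Subtype.val_injective.comp (S.orderIsoOfFin hS).injective)).trans <|
      (exists_perm_comp_equiv_iff (S.orderIsoOfFin hS).toEquiv (fun i j => M i j = true)).trans <|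
      by simp only [mem_inter, mem_filter, mem_univ, true_and, and_comm]
  have hall := forall_card_eq_exists_injective_iff (fun i => univ.filter fun j => M i j = true)
    (by simpa using hkn)
  simp only [Fintype.card_fin] at hall
  rw [prod_ne_zero_iff, ← hall]
  constructor
  · intro h S hS
    exact (hdet S hS).mp (h ⟨S, by simpa using hS⟩ (mem_attach _ _))
  · intro h S _
    exact (hdet S.1 _).mpr (h S.1 (mem_filter.mp S.2).2)

/-- For a k×n binary matrix M (n ≥ k), the product of the determinants of
all k×k submatrices of the matrix of indeterminates var(M) is not identically zero iff
|∪_{i∈I} supp(M_i)| ≥ n − k + |I| for every nonempty set I of rows. -/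
theorem stmt10 {k n : ℕ} (hkn : k ≤ n) {F : Type} [Field F] [Fintype F]
    (M : Matrix (Fin k) (Fin n) Bool) :
    (∏ S ∈ (Finset.univ.filter (fun S : Finset (Fin n) => S.card = k)).attach,
        Matrix.det
          (Matrix.submatrix
            (Matrix.of fun i j =>
              if M i j then (MvPolynomial.X (i, j) : MvPolynomial (Fin k × Fin n) F) else 0)
            id
            (fun i : Fin k =>
              ((S.1.orderIsoOfFin (Finset.mem_filter.mp S.2).2 i : {x // x ∈ S.1}) : Fin n)))) ≠ 0 ↔
    (∀ I : Finset (Fin k), I.Nonempty →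
        n - k + I.card ≤
          (I.biUnion (fun i => Finset.univ.filter (fun j => M i j = true))).card) :=
  stmt10_general hkn M
end

section
/- Let M be the adjacency matrix of an (n,k)-SMAN with n ≥ k ≥ 2, and suppose there exists a k×n matrix G over some finite field F_q such that: supp(G[j]) ⊆ supp(M[j]) for all j, every k columns of G are linearly independent (G generates an MDS code), and every k−1 columns of G generate a code of minimum distance at least 2. Then M satisfies the Weak Security Condition: |∪_{j∈J} supp(M[j])| ≥ |J| + 1 for every nonempty J ⊊ [n] with |J| < k. -/
/-!
Let `S` be the set of sources adjacent to a set `J` of fewer than `k` relays. The columns of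
`G` indexed by `J` are linearly independent (MDS) and vanish outside `S`, so `|J| ≤ |S|`. If
`|S| ≤ |J|`, they therefore span every vector supported in `S`, in particular a unit vector
`e_s`. Padding `J` to `k - 1` columns then exhibits `e_s`, a codeword of weight one, in the code
generated by those `k - 1` columns.
-/

open Finset Matrix

variable {m ι κ F : Type*} [Field F]

variable (F) in
def supportedOn (S : Finset ι) : Submodule F (ι → F) :=
  Submodule.pi (↑S)ᶜ fun _ => ⊥

theorem mem_supportedOn {S : Finset ι} {x : ι → F} :
    x ∈ supportedOn F S ↔ ∀ i ∉ S, x i = 0 := by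
  simp [supportedOn, Submodule.mem_pi]

section Supported

variable [Fintype ι]

theorem finrank_supportedOn_le (S : Finset ι) :
    Module.finrank F (supportedOn F S) ≤ S.card := by
  let restrict := LinearMap.funLeft F F ((↑) : S → ι) ∘ₗ (supportedOn F S).subtype
  have hinj : Function.Injective restrict := by
    intro x y hxy
    ext i
    by_cases hi : i ∈ S
    · exact congrFun hxy ⟨i, hi⟩
    · rw [mem_supportedOn.mp x.2 i hi, mem_supportedOn.mp y.2 i hi]
  simpa using LinearMap.finrank_le_finrank_of_injective hinj

variable [Fintype κ] {v : κ → ι → F} {S : Finset ι}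

theorem LinearIndependent.card_le_of_supportedOn (hv : LinearIndependent F v)
    (hS : ∀ j, v j ∈ supportedOn F S) : Fintype.card κ ≤ S.card := by
  calc Fintype.card κ = Module.finrank F (Submodule.span F (Set.range v)) :=
        (finrank_span_eq_card hv).symm
    _ ≤ Module.finrank F (supportedOn F S) :=
        Submodule.finrank_mono (Submodule.span_le.mpr (Set.range_subset_iff.mpr hS))
    _ ≤ S.card := finrank_supportedOn_le S

theorem LinearIndependent.span_eq_supportedOn (hv : LinearIndependent F v)
    (hS : ∀ j, v j ∈ supportedOn F S) (hcard : S.card ≤ Fintype.card κ) :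
    Submodule.span F (Set.range v) = supportedOn F S := by
  refine Submodule.eq_of_le_of_finrank_le
    (Submodule.span_le.mpr (Set.range_subset_iff.mpr hS)) ?_
  rw [finrank_span_eq_card hv]
  exact (finrank_supportedOn_le S).trans hcard

end Supported

theorem Matrix.linearIndependent_col_of_rank_eq_card [Fintype ι] {A : Matrix m ι F}
    (h : A.rank = Fintype.card ι) : LinearIndependent F A.col := by
  rw [linearIndependent_iff_card_eq_finrank_span, ← h, A.rank_eq_finrank_span_cols]
  rfl

theorem Matrix.linearIndependent_col_of_forall_rank [Fintype m] [Fintype ι] {G : Matrix m ι F}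
    (hG : ∀ K : Finset ι, K.card = Fintype.card m →
      (G.submatrix id (fun j : K => (j : ι))).rank = Fintype.card m)
    (hm : Fintype.card m ≤ Fintype.card ι) {J : Finset ι} (hJ : J.card ≤ Fintype.card m) :
    LinearIndependent F (fun j : J => G.col j) := by
  obtain ⟨K, hJK, hK⟩ := Finset.exists_superset_card_eq hJ hm
  have hK' : LinearIndependent F (G.submatrix id (fun j : K => (j : ι))).col :=
    linearIndependent_col_of_rank_eq_card (by rw [hG K hK, Fintype.card_coe, hK])
  exact hK'.comp (Set.inclusion hJK) (Set.inclusion_injective hJK)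

theorem Matrix.exists_sum_mul_eq_sum_smul_col (G : Matrix m ι F) {J E : Finset ι} (hJE : J ⊆ E)
    (c : J → F) : ∃ α : ι → F, (fun i => ∑ j ∈ E, α j * G i j) = ∑ j, c j • G.col j := by
  classical
  refine ⟨fun j => if h : j ∈ J then c ⟨j, h⟩ else 0, funext fun i => ?_⟩
  rw [← Finset.sum_subset hJE (fun j _ hj => by simp [hj]), ← Finset.sum_coe_sort J]
  simp [Matrix.col]

theorem stmt12_general {k n : ℕ} {F : Type} [Field F] [DecidableEq F]
    (hkn : k ≤ n)
    (M : Matrix (Fin k) (Fin n) Bool) (G : Matrix (Fin k) (Fin n) F)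
    (hsupp : ∀ i j, M i j = false → G i j = 0)
    (hMDS : ∀ S : Finset (Fin n), S.card = k →
        (G.submatrix id (fun j : {x // x ∈ S} => (j : Fin n))).rank = k)
    (hdist : ∀ E : Finset (Fin n), E.card = k - 1 →
        ∀ α : Fin n → F, (fun i => ∑ j ∈ E, α j * G i j) ≠ 0 →
          2 ≤ (Finset.univ.filter (fun i : Fin k => (∑ j ∈ E, α j * G i j) ≠ 0)).card) :
    ∀ J : Finset (Fin n), J.Nonempty → J.card < k →
      J.card + 1 ≤ (J.biUnion (fun j => Finset.univ.filter (fun i => M i j = true))).card := by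
  intro J hJne hJk
  set S := J.biUnion (fun j => Finset.univ.filter (fun i => M i j = true))
  have hcol (j : J) : G.col j ∈ supportedOn F S := by
    refine mem_supportedOn.mpr fun i hi => hsupp i j ?_
    exact Bool.eq_false_iff.mpr fun h => hi (mem_biUnion.mpr ⟨j, j.2, by simpa using h⟩)
  have hind : LinearIndependent F (fun j : J => G.col j) :=
    linearIndependent_col_of_forall_rank (by simpa using hMDS) (by simpa using hkn)
      (by simpa using hJk.le)
  by_contra! hS
  have hspan := hind.span_eq_supportedOn hcol (by simpa using Nat.lt_succ_iff.mp hS)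
  obtain ⟨s, hs⟩ : S.Nonempty :=
    card_pos.mp (hJne.card_pos.trans_le (by simpa using hind.card_le_of_supportedOn hcol))
  have hsingle : Pi.single s 1 ∈ Submodule.span F (Set.range fun j : J => G.col j) :=
    hspan ▸ mem_supportedOn.mpr fun i hi => Pi.single_eq_of_ne (ne_of_mem_of_not_mem hs hi).symm 1
  obtain ⟨c, hc⟩ := (Submodule.mem_span_range_iff_exists_fun F).mp hsingle
  obtain ⟨E, hJE, hE⟩ := exists_superset_card_eq (s := J) (n := k - 1) (by omega) (by simp only [Fintype.card_fin]; omega)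
  obtain ⟨α, hα⟩ := G.exists_sum_mul_eq_sum_smul_col hJE c
  rw [hc] at hα
  have hweight := hdist E hE α (by rw [hα]; exact Pi.single_ne_zero_iff.mpr one_ne_zero)
  simp only [fun i => congrFun hα i, Pi.single_apply] at hweight
  simp [filter_eq'] at hweight

/-- If a SMAN with adjacency matrix M admits an encoding matrix G
(respecting the zero pattern of M) that generates an MDS code and whose every k−1
columns generate a code of minimum distance ≥ 2, then M satisfies the Weak Security
Condition. -/
theorem stmt12 {k n : ℕ} {F : Type} [Field F] [Fintype F] [DecidableEq F]
    (hk : 2 ≤ k) (hkn : k ≤ n)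
    (M : Matrix (Fin k) (Fin n) Bool) (G : Matrix (Fin k) (Fin n) F)
    (hsupp : ∀ i j, M i j = false → G i j = 0)
    (hMDS : ∀ S : Finset (Fin n), S.card = k →
        (G.submatrix id (fun j : {x // x ∈ S} => (j : Fin n))).rank = k)
    (hdist : ∀ E : Finset (Fin n), E.card = k - 1 →
        ∀ α : Fin n → F, (fun i => ∑ j ∈ E, α j * G i j) ≠ 0 →
          2 ≤ (Finset.univ.filter (fun i : Fin k => (∑ j ∈ E, α j * G i j) ≠ 0)).card) :
    ∀ J : Finset (Fin n), J.Nonempty → J.card < k →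
      J.card + 1 ≤ (J.biUnion (fun j => Finset.univ.filter (fun i => M i j = true))).card :=
  stmt12_general hkn M G hsupp hMDS hdist
end

section
/- Let R_1,…,R_k ⊆ [n] satisfy the Weak Security Condition |∪_{i∈I} R_i| ≥ n − k + |I| + 1 for all nonempty I ⊊ [k]. Suppose A, B ⊆ [k] are nonempty sets not containing a fixed index r, a,b ∈ R_r distinct, and both |(∪_{i∈A} R_i) ∪ (R_r∖{a})| ≤ n − k + |A| + 1 and |(∪_{i∈B} R_i) ∪ (R_r∖{b})| ≤ n − k + |B| + 1. Then |∪_{i∈A} R_i| = n − k + |A| + 1, |∪_{i∈B} R_i| = n − k + |B| + 1, R_r∖{a} ⊆ ∪_{i∈A} R_i, and R_r∖{b} ⊆ ∪_{i∈B} R_i. -/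
open Finset

theorem Finset.card_eq_and_subset_of_le_card_of_card_union_le {α : Type*} [DecidableEq α]
    {s t : Finset α} {m : ℕ} (hs : m ≤ s.card) (hst : (s ∪ t).card ≤ m) :
    s.card = m ∧ t ⊆ s := by
  have hcard : s.card = m := le_antisymm ((card_le_card subset_union_left).trans hst) hs
  have hunion : s ∪ t = s :=
    (eq_of_subset_of_card_le subset_union_left (hst.trans_eq hcard.symm)).symm
  exact ⟨hcard, union_eq_left.mp hunion⟩

theorem stmt13_general {k n : ℕ} (R : Fin k → Finset (Fin n))
    (hWSC : ∀ I : Finset (Fin k), I.Nonempty → I ≠ Finset.univ →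
        n - k + I.card + 1 ≤ (I.biUnion R).card)
    (r : Fin k) (A B : Finset (Fin k)) (hA : A.Nonempty) (hB : B.Nonempty)
    (hrA : r ∉ A) (hrB : r ∉ B)
    (a b : Fin n)
    (hAa : ((A.biUnion R) ∪ (R r \ {a})).card ≤ n - k + A.card + 1)
    (hBb : ((B.biUnion R) ∪ (R r \ {b})).card ≤ n - k + B.card + 1) :
    (A.biUnion R).card = n - k + A.card + 1 ∧
    (B.biUnion R).card = n - k + B.card + 1 ∧
    (R r \ {a}) ⊆ A.biUnion R ∧
    (R r \ {b}) ⊆ B.biUnion R := by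
  obtain ⟨hcardA, hsubA⟩ := card_eq_and_subset_of_le_card_of_card_union_le
    (hWSC A hA (ne_of_mem_of_not_mem' (mem_univ r) hrA).symm) hAa
  obtain ⟨hcardB, hsubB⟩ := card_eq_and_subset_of_le_card_of_card_union_le
    (hWSC B hB (ne_of_mem_of_not_mem' (mem_univ r) hrB).symm) hBb
  exact ⟨hcardA, hcardB, hsubA, hsubB⟩

/-- Consequences of the two deletion inequalities under the Weak Security
Condition. -/
theorem stmt13 {k n : ℕ} (hkn : k ≤ n) (R : Fin k → Finset (Fin n))
    (hWSC : ∀ I : Finset (Fin k), I.Nonempty → I ≠ Finset.univ →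
        n - k + I.card + 1 ≤ (I.biUnion R).card)
    (r : Fin k) (A B : Finset (Fin k)) (hA : A.Nonempty) (hB : B.Nonempty)
    (hrA : r ∉ A) (hrB : r ∉ B)
    (a b : Fin n) (ha : a ∈ R r) (hb : b ∈ R r) (hab : a ≠ b)
    (hAa : ((A.biUnion R) ∪ (R r \ {a})).card ≤ n - k + A.card + 1)
    (hBb : ((B.biUnion R) ∪ (R r \ {b})).card ≤ n - k + B.card + 1) :
    (A.biUnion R).card = n - k + A.card + 1 ∧
    (B.biUnion R).card = n - k + B.card + 1 ∧
    (R r \ {a}) ⊆ A.biUnion R ∧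
    (R r \ {b}) ⊆ B.biUnion R :=
  stmt13_general R hWSC r A B hA hB hrA hrB a b hAa hBb
end

section
/- Let R_1,…,R_k ⊆ [n] satisfy |∪_{i∈I} R_i| ≥ n − k + |I| + 1 for all nonempty I ⊊ [k], and let A, B ⊆ [k] be nonempty with A ∩ B possibly empty, r ∉ A ∪ B, |R_r| ≥ n − k + 3, with R_r∖{a} ⊆ R_A and R_r∖{b} ⊆ R_B for distinct a,b ∈ R_r (where R_S := ∪_{i∈S} R_i). Then |R_A ∩ R_B| ≥ n − k + |A ∩ B| + 1. -/
open Finset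

namespace Finset

variable {α ι : Type*} [DecidableEq α]

theorem biUnion_inter_subset_inter_biUnion [DecidableEq ι] (R : ι → Finset α) (A B : Finset ι) :
    (A ∩ B).biUnion R ⊆ A.biUnion R ∩ B.biUnion R :=
  subset_inter (biUnion_subset_biUnion_of_subset_left R inter_subset_left)
    (biUnion_subset_biUnion_of_subset_left R inter_subset_right)

theorem sdiff_pair_subset_inter {s X Y : Finset α} {a b : α}
    (hX : s \ {a} ⊆ X) (hY : s \ {b} ⊆ Y) : s \ {a, b} ⊆ X ∩ Y :=
  subset_inter ((sdiff_subset_sdiff_right s (by simp)).trans hX)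
    ((sdiff_subset_sdiff_right s (by simp)).trans hY)

theorem card_sub_two_le_card_sdiff_pair (s : Finset α) (a b : α) : #s - 2 ≤ #(s \ {a, b}) :=
  (Nat.sub_le_sub_left card_le_two _).trans (le_card_sdiff _ _)

end Finset

theorem stmt14_general {k n : ℕ} (R : Fin k → Finset (Fin n))
    (hWSC : ∀ I : Finset (Fin k), I.Nonempty → I ≠ Finset.univ →
        n - k + I.card + 1 ≤ (I.biUnion R).card)
    (A B : Finset (Fin k))
    (r : Fin k) (hr : r ∉ A ∪ B) (hRr : n - k + 3 ≤ (R r).card)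
    (a b : Fin n)
    (hsubA : R r \ {a} ⊆ A.biUnion R) (hsubB : R r \ {b} ⊆ B.biUnion R) :
    n - k + (A ∩ B).card + 1 ≤ ((A.biUnion R) ∩ (B.biUnion R)).card := by
  rcases (A ∩ B).eq_empty_or_nonempty with hAB | hAB
  · rw [hAB, card_empty]
    calc n - k + 0 + 1 ≤ #(R r) - 2 := by omega
      _ ≤ #(R r \ {a, b}) := card_sub_two_le_card_sdiff_pair _ a b
      _ ≤ _ := card_le_card (sdiff_pair_subset_inter hsubA hsubB)
  · have hproper : A ∩ B ≠ univ := fun h ↦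
      hr (mem_union_left B (mem_of_mem_inter_left (h ▸ mem_univ r)))
    exact (hWSC _ hAB hproper).trans
      (card_le_card (biUnion_inter_subset_inter_biUnion R A B))

/-- Lower bound on |R_A ∩ R_B| under the Weak Security Condition and the
inclusions R_r∖{a} ⊆ R_A, R_r∖{b} ⊆ R_B. -/
theorem stmt14 {k n : ℕ} (hkn : k ≤ n) (R : Fin k → Finset (Fin n))
    (hWSC : ∀ I : Finset (Fin k), I.Nonempty → I ≠ Finset.univ →
        n - k + I.card + 1 ≤ (I.biUnion R).card)
    (A B : Finset (Fin k)) (hA : A.Nonempty) (hB : B.Nonempty)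
    (r : Fin k) (hr : r ∉ A ∪ B) (hRr : n - k + 3 ≤ (R r).card)
    (a b : Fin n) (ha : a ∈ R r) (hb : b ∈ R r) (hab : a ≠ b)
    (hsubA : R r \ {a} ⊆ A.biUnion R) (hsubB : R r \ {b} ⊆ B.biUnion R) :
    n - k + (A ∩ B).card + 1 ≤ ((A.biUnion R) ∩ (B.biUnion R)).card :=
  stmt14_general R hWSC A B r hr hRr a b hsubA hsubB
end

section
/- Let b ≥ 1 and ℓ ≥ 1 with ℓ < k, and suppose a k×n matrix G over F_q generates an MDS code such that for every subset E ⊆ [n] with |E| = ℓ, the ℓ-dimensional code of length k generated by (G[E])^T has minimum distance at least b+1. Then for every nonempty J ⊆ [n] with |J| ≤ ℓ, |∪_{j∈J} supp(G[j])| ≥ |J| + b. -/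
open Finset Matrix

/-!
The columns of `G` indexed by `J` are linearly independent (they sit inside `k` columns of full
rank), so they span a code `W` of dimension `|J|` and minimum distance `≥ b + 1`, all of whose
words vanish outside `U = ⋃_{j ∈ J} supp G[j]`. Requiring a word of `W` to vanish on `|J| - 1`
further coordinates of `U` is fewer conditions than `dim W`, so some nonzero word is supported on
the remaining `|U| - |J| + 1` coordinates; hence `b + 1 ≤ |U| - |J| + 1`.
-/

theorem Submodule.finrank_add_le_card_add_one_of_le_hammingNorm {ι F : Type*} [Fintype ι]
    [DecidableEq ι] [Field F] [DecidableEq F] (W : Submodule F (ι → F)) (U : Finset ι) {d : ℕ}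
    (hW : 0 < Module.finrank F W) (hU : ∀ w ∈ W, ∀ i ∉ U, w i = 0)
    (hd : ∀ w ∈ W, w ≠ 0 → d ≤ hammingNorm w) :
    Module.finrank F W + d ≤ #U + 1 := by
  obtain ⟨T, hTU, hT⟩ := exists_subset_card_eq (min_le_right (Module.finrank F W - 1) #U)
  let restrict : W →ₗ[F] (T → F) := (LinearMap.funLeft F F ((↑) : T → ι)).comp W.subtype
  have hker : LinearMap.ker restrict ≠ ⊥ := LinearMap.ker_ne_bot_of_finrank_lt <| by
    simp only [Module.finrank_fintype_fun_eq_card, Fintype.card_coe]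
    omega
  obtain ⟨⟨w, hwW⟩, hw_ker, hw_ne⟩ := (Submodule.ne_bot_iff _).mp hker
  have hw0 : w ≠ 0 := fun h => hw_ne (Subtype.ext h)
  have hwT : ∀ t ∈ T, w t = 0 := fun t ht => congrFun (LinearMap.mem_ker.mp hw_ker) ⟨t, ht⟩
  have hsupp : ({i | w i ≠ 0} : Finset ι) ⊆ U \ T := by
    intro i hi
    simp only [mem_filter, mem_univ, true_and] at hi
    exact mem_sdiff.mpr ⟨by_contra fun h => hi (hU w hwW i h), fun h => hi (hwT i h)⟩
  have hweight : hammingNorm w ≤ #U - #T :=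
    (card_le_card hsupp).trans_eq (card_sdiff_of_subset hTU)
  have := hd w hwW hw0
  have := hammingNorm_pos_iff.mpr hw0
  omega

theorem Matrix.linearIndepOn_col_of_rank_submatrix_eq_card {m κ F : Type*} [Fintype m]
    [Field F] (G : Matrix m κ F) (S : Finset κ)
    (hS : (G.submatrix id (fun j : {x // x ∈ S} => (j : κ))).rank = #S) :
    LinearIndepOn F G.col (S : Set κ) := by
  rw [rank_eq_finrank_span_cols] at hS
  exact linearIndependent_iff_card_eq_finrank_span.mpr ((Fintype.card_coe S).trans hS.symm)

theorem Matrix.apply_eq_zero_of_mem_span_col_image {m κ R : Type*} [CommSemiring R]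
    (G : Matrix m κ R) {J : Set κ} {w : m → R} (hw : w ∈ Submodule.span R (G.col '' J)) {i : m}
    (hi : ∀ j ∈ J, G i j = 0) : w i = 0 := by
  refine (Submodule.span_le (p := LinearMap.ker (LinearMap.proj i)) |>.mpr ?_) hw
  rintro _ ⟨j, hj, rfl⟩
  exact hi j hj

theorem stmt16_general {k n ℓ b : ℕ} {F : Type} [Field F] [DecidableEq F]
    (hℓk : ℓ < k) (hkn : k ≤ n)
    (G : Matrix (Fin k) (Fin n) F)
    (hMDS : ∀ S : Finset (Fin n), S.card = k →
        (G.submatrix id (fun j : {x // x ∈ S} => (j : Fin n))).rank = k)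
    (hdist : ∀ E : Finset (Fin n), E.card = ℓ →
        ∀ α : Fin n → F, (fun i => ∑ j ∈ E, α j * G i j) ≠ 0 →
          b + 1 ≤ (Finset.univ.filter (fun i : Fin k => (∑ j ∈ E, α j * G i j) ≠ 0)).card) :
    ∀ J : Finset (Fin n), J.Nonempty → J.card ≤ ℓ →
      J.card + b ≤ (J.biUnion (fun j => Finset.univ.filter (fun i => G i j ≠ 0))).card := by
  intro J hJ hJℓ
  obtain ⟨S, hJS, hS⟩ := Finset.exists_superset_card_eq (hJℓ.trans hℓk.le) (by simpa using hkn)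
  obtain ⟨E, hJE, hE⟩ := Finset.exists_superset_card_eq hJℓ (by simpa using hℓk.le.trans hkn)
  have hind : LinearIndepOn F G.col (J : Set (Fin n)) :=
    (G.linearIndepOn_col_of_rank_submatrix_eq_card S (by rw [hS, hMDS S hS])).mono hJS
  have hdim : Module.finrank F (Submodule.span F (G.col '' J)) = #J := by
    rw [Set.image_eq_range]
    simpa using finrank_span_eq_card hind
  have hsupp (w) (hw : w ∈ Submodule.span F (G.col '' J)) (i)
      (hi : i ∉ J.biUnion fun j => univ.filter fun i => G i j ≠ 0) : w i = 0 :=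
    G.apply_eq_zero_of_mem_span_col_image hw fun j hj => by
      by_contra h
      exact hi (mem_biUnion.mpr ⟨j, hj, by simpa using h⟩)
  have hweight (w) (hw : w ∈ Submodule.span F (G.col '' J)) (hw0 : w ≠ 0) :
      b + 1 ≤ hammingNorm w := by
    obtain ⟨α, hα, rfl⟩ := (Finsupp.mem_span_image_iff_linearCombination F).mp hw
    have hαE : Finsupp.linearCombination F G.col α = fun i => ∑ j ∈ E, α j * G i j := by
      rw [Finsupp.linearCombination_apply_of_mem_supported F (Finsupp.supported_mono hJE hα)]
      ext i
      simp [Matrix.col]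
    rw [hαE] at hw0 ⊢
    exact hdist E hE α hw0
  have := (Submodule.span F (G.col '' J)).finrank_add_le_card_add_one_of_le_hammingNorm _
    (hdim ▸ hJ.card_pos) hsupp hweight
  omega

/-- If G generates an MDS code and every ℓ columns of G generate (after
transposing) a code of minimum distance ≥ b+1, then every nonempty set J of at most ℓ
columns satisfies |∪_{j∈J} supp(G[j])| ≥ |J| + b. -/
theorem stmt16 {k n ℓ b : ℕ} {F : Type} [Field F] [Fintype F] [DecidableEq F]
    (hb : 1 ≤ b) (hℓ : 1 ≤ ℓ) (hℓk : ℓ < k) (hkn : k ≤ n)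
    (G : Matrix (Fin k) (Fin n) F)
    (hMDS : ∀ S : Finset (Fin n), S.card = k →
        (G.submatrix id (fun j : {x // x ∈ S} => (j : Fin n))).rank = k)
    (hdist : ∀ E : Finset (Fin n), E.card = ℓ →
        ∀ α : Fin n → F, (fun i => ∑ j ∈ E, α j * G i j) ≠ 0 →
          b + 1 ≤ (Finset.univ.filter (fun i : Fin k => (∑ j ∈ E, α j * G i j) ≠ 0)).card) :
    ∀ J : Finset (Fin n), J.Nonempty → J.card ≤ ℓ →
      J.card + b ≤ (J.biUnion (fun j => Finset.univ.filter (fun i => G i j ≠ 0))).card :=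
  stmt16_general hℓk hkn G hMDS hdist
end

section
/- Suppose f ∈ F_q[x_1,…,x_m] is a nonzero polynomial and the degree of f in each variable is less than q' for some field extension F_{q'} of F_q with q' sufficiently large (q' greater than the total degree of f). Then there exists an assignment (g_1,…,g_m) ∈ F_{q'}^m with f(g_1,…,g_m) ≠ 0. Consequently, if M is a k×n binary matrix satisfying both |∪_{i∈I} supp(M_i)| ≥ n−k+|I| for all nonempty I ⊆ [k] and the Weak Security Condition, then for sufficiently large q there is a matrix G over F_q with supp(G[j]) ⊆ supp(M[j]) such that every k×k submatrix of G is invertible and every (k−1)×(k−1) submatrix within any k−1 columns of G is invertible. -/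
open Finset Matrix

/-!
Replace every `true` entry `(i, j)` of `M` by an indeterminate `X (i, j)`. For each minor in
question, the row condition (for `k` columns) or the weak security condition (for `k - 1` rows and
`k - 1` columns) is Hall's condition for the bipartite graph of the pattern, so there is a
permutation supported on it; specialising its indeterminates to `1` and all others to `0` turns the
minor into a permutation matrix, hence the minor is a nonzero polynomial. All minors have degree at
most `k`, so over a finite field with more than `k` times their number of elements the
Schwartz–Zippel lemma gives a common non-root, at which the pattern matrix evaluates to `G`.
-/

namespace MvPolynomial

theorem totalDegree_map_of_injective {R S σ : Type*} [CommSemiring R] [CommSemiring S]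
    {f : R →+* S} (hf : Function.Injective f) (p : MvPolynomial σ R) :
    (map f p).totalDegree = p.totalDegree := by
  simp only [totalDegree, support_map_of_injective _ hf]

variable {R σ : Type*} [CommRing R]

section FiniteDomain

variable [IsDomain R] [Fintype R]

theorem exists_eval_ne_zero_of_totalDegree_lt_card_of_fin {n : ℕ} {p : MvPolynomial (Fin n) R}
    (hp : p ≠ 0) (hdeg : p.totalDegree < Fintype.card R) : ∃ x, eval x p ≠ 0 := by
  classical
  by_contra! h
  have hsz := schwartz_zippel_totalDegree hp univ
  rw [filter_true_of_mem fun x _ ↦ h x, Fintype.card_piFinset_const, Nat.cast_pow,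
    div_self (by simp [Fintype.card_ne_zero]), one_le_div₀ (by simp [Fintype.card_pos])] at hsz
  exact hdeg.not_ge (by exact_mod_cast hsz)

theorem exists_eval_ne_zero_of_totalDegree_lt_card [Finite σ] {p : MvPolynomial σ R}
    (hp : p ≠ 0) (hdeg : p.totalDegree < Fintype.card R) : ∃ x, eval x p ≠ 0 := by
  obtain ⟨n, ⟨e⟩⟩ := Finite.exists_equiv_fin σ
  obtain ⟨x, hx⟩ := exists_eval_ne_zero_of_totalDegree_lt_card_of_fin (p := renameEquiv R e p)
    ((renameEquiv R e).injective.ne hp |>.trans_eq (map_zero _)) (by rwa [totalDegree_renameEquiv])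
  exact ⟨x ∘ e, by rwa [renameEquiv_apply, eval_rename] at hx⟩

theorem exists_forall_eval_ne_zero [Finite σ] {ι : Type*} [Fintype ι]
    (p : ι → MvPolynomial σ R) (hp : ∀ i, p i ≠ 0)
    (hdeg : ∑ i, (p i).totalDegree < Fintype.card R) : ∃ x, ∀ i, eval x (p i) ≠ 0 := by
  obtain ⟨x, hx⟩ := exists_eval_ne_zero_of_totalDegree_lt_card
    (prod_ne_zero_iff.mpr fun i _ ↦ hp i) ((totalDegree_finsetProd _ _).trans_lt hdeg)
  rw [map_prod, prod_ne_zero_iff] at hx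
  exact ⟨x, fun i ↦ hx i (mem_univ i)⟩

end FiniteDomain

theorem totalDegree_det_le {m : Type*} [Fintype m] [DecidableEq m] {d : ℕ}
    (A : Matrix m m (MvPolynomial σ R)) (hA : ∀ i j, (A i j).totalDegree ≤ d) :
    A.det.totalDegree ≤ Fintype.card m * d := by
  rw [det_apply]
  refine (totalDegree_finsetSum _ _).trans (Finset.sup_le fun τ _ ↦ ?_)
  refine (totalDegree_smul_le _ _).trans <| (totalDegree_finsetProd _ _).trans ?_
  simpa using Finset.sum_le_sum fun i (_ : i ∈ univ) ↦ hA (τ i) i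

end MvPolynomial

namespace Matrix

variable {ι κ m : Type*}

theorem exists_perm_forall_apply_of_card_le_card_biUnion [Fintype m] [DecidableEq m]
    (A : Matrix m m Bool)
    (h : ∀ s : Finset m, #s ≤ #(s.biUnion fun i ↦ univ.filter fun j ↦ A i j = true)) :
    ∃ σ : Equiv.Perm m, ∀ i, A i (σ i) = true := by
  obtain ⟨g, hg, hgA⟩ := (all_card_le_biUnion_card_iff_exists_injective _).mp h
  exact ⟨.ofBijective g hg.bijective_of_finite, fun i ↦ (mem_filter.mp (hgA i)).2⟩

/-- At most `card κ - card m` of the columns met by `I` lie outside the range of `f`, so the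
hypothesis is Hall's condition for the square submatrix. -/
theorem exists_perm_forall_submatrix_apply_of_card_le [Fintype κ] [Fintype m] [DecidableEq κ]
    [DecidableEq m] (M : Matrix ι κ Bool) (e : m → ι) {f : m → κ} (hf : Function.Injective f)
    (h : ∀ I : Finset m, I.Nonempty → Fintype.card κ - Fintype.card m + #I ≤
      #(I.biUnion fun i ↦ univ.filter fun j ↦ M (e i) j = true)) :
    ∃ σ : Equiv.Perm m, ∀ i, M (e i) (f (σ i)) = true := by
  refine exists_perm_forall_apply_of_card_le_card_biUnion (M.submatrix e f) fun I ↦ ?_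
  obtain rfl | hI := I.eq_empty_or_nonempty
  · simp
  have hU := h I hI
  set U := I.biUnion fun i ↦ univ.filter fun j ↦ M (e i) j = true
  have himage : (I.biUnion fun i ↦ univ.filter fun l ↦ M.submatrix e f i l = true).image f =
      U ∩ univ.image f := by
    ext j
    simp only [U, mem_image, mem_biUnion, mem_filter, mem_univ, true_and, mem_inter]
    constructor
    · rintro ⟨l, ⟨i, hi, hil⟩, rfl⟩
      exact ⟨⟨i, hi, hil⟩, l, rfl⟩
    · rintro ⟨⟨i, hi, hij⟩, l, rfl⟩
      exact ⟨l, ⟨i, hi, hij⟩, rfl⟩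
  have hout : #(U \ univ.image f) ≤ Fintype.card κ - Fintype.card m := by
    calc #(U \ univ.image f) ≤ #(univ.image f)ᶜ :=
          card_le_card fun j hj ↦ mem_compl.mpr (mem_sdiff.mp hj).2
      _ = Fintype.card κ - Fintype.card m := by
          rw [card_compl, card_image_of_injective _ hf, card_univ]
  calc #I ≤ #(U ∩ univ.image f) := by
        have := card_inter_add_card_sdiff U (univ.image f)
        omega
    _ ≤ _ := himage ▸ card_image_le

noncomputable def patternMatrix (M : Matrix ι κ Bool) (R : Type*) [CommSemiring R] :
    Matrix ι κ (MvPolynomial (ι × κ) R) :=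
  of fun i j ↦ if M i j then MvPolynomial.X (i, j) else 0

section PatternMatrix

variable (M : Matrix ι κ Bool) {R : Type*} [CommRing R]

theorem patternMatrix_map_eval_eq_zero (x : ι × κ → R) {i : ι} {j : κ} (h : M i j = false) :
    (patternMatrix M R).map (MvPolynomial.eval x) i j = 0 := by
  simp [patternMatrix, h]

theorem totalDegree_det_submatrix_patternMatrix_le [Fintype m] [DecidableEq m]
    (e : m → ι) (f : m → κ) :
    ((patternMatrix M R).submatrix e f).det.totalDegree ≤ Fintype.card m := by
  refine (MvPolynomial.totalDegree_det_le (d := 1) _ fun i j ↦ ?_).trans_eq (mul_one _)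
  simp only [submatrix_apply, patternMatrix, of_apply]
  split_ifs
  · exact (MvPolynomial.totalDegree_monomial_le _ _).trans_eq (by simp)
  · simp

theorem det_submatrix_patternMatrix_ne_zero [Nontrivial R] [Fintype m] [DecidableEq m]
    {e : m → ι} {f : m → κ} (he : Function.Injective e) (hf : Function.Injective f)
    (σ : Equiv.Perm m) (hσ : ∀ i, M (e i) (f (σ i)) = true) :
    ((patternMatrix M R).submatrix e f).det ≠ 0 := by
  classical
  let x : ι × κ → R := fun p ↦ if ∃ i, (e i, f (σ i)) = p then 1 else 0
  have hxef : ∀ i j, x (e i, f j) = if σ i = j then 1 else 0 := fun i j ↦ by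
    have : (∃ i', (e i', f (σ i')) = (e i, f j)) ↔ σ i = j :=
      ⟨fun ⟨i', h⟩ ↦ by rw [Prod.mk.injEq] at h; rw [← he h.1, hf h.2], fun h ↦ ⟨i, by rw [h]⟩⟩
    simp only [x, this]
  have hx : ((patternMatrix M R).submatrix e f).map (MvPolynomial.eval x) =
      (1 : Matrix m m R).submatrix id σ.symm := by
    ext i j
    by_cases hij : σ i = j
    · subst hij
      simp [patternMatrix, hσ, hxef, one_apply]
    · simp only [map_apply, submatrix_apply, patternMatrix, of_apply, id_eq, one_apply,
        Equiv.eq_symm_apply, hij, if_false]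
      split_ifs <;> simp [hxef, hij]
  intro h
  have := congrArg (MvPolynomial.eval x) h
  rw [RingHom.map_det, RingHom.mapMatrix_apply, hx, det_permute', det_one, mul_one,
    map_zero] at this
  rcases Int.units_eq_one_or (Equiv.Perm.sign σ.symm) with hs | hs <;> simp [hs] at this

end PatternMatrix

section Minors

variable {k n : ℕ} (M : Matrix (Fin k) (Fin n) Bool) {R : Type*} [CommRing R] [Nontrivial R]

theorem det_submatrix_id_patternMatrix_ne_zero
    (hrow : ∀ I : Finset (Fin k), I.Nonempty →
      n - k + #I ≤ #(I.biUnion fun i ↦ univ.filter fun j ↦ M i j = true))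
    (c : Fin k ↪ Fin n) :
    ((patternMatrix M R).submatrix id c).det ≠ 0 := by
  obtain ⟨σ, hσ⟩ := exists_perm_forall_submatrix_apply_of_card_le M id c.injective
    fun I hI ↦ by simpa using hrow I hI
  exact det_submatrix_patternMatrix_ne_zero M Function.injective_id c.injective σ hσ

theorem det_submatrix_patternMatrix_ne_zero_of_weakSecurity
    (hWS : ∀ J : Finset (Fin n), J.Nonempty → #J < k →
      #J + 1 ≤ #(J.biUnion fun j ↦ univ.filter fun i ↦ M i j = true))
    (r : Fin (k - 1) ↪ Fin k) (c : Fin (k - 1) ↪ Fin n) :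
    ((patternMatrix M R).submatrix r c).det ≠ 0 := by
  obtain ⟨σ, hσ⟩ := exists_perm_forall_submatrix_apply_of_card_le Mᵀ c r.injective fun J hJ ↦ by
    have hJc : #(J.image c) = #J := card_image_of_injective J c.injective
    have hJk : #J < k := by
      have hJle := J.card_le_univ
      simp only [Fintype.card_fin] at hJle
      have hJpos := hJ.card_pos
      omega
    have hWSJ := hWS (J.image c) (hJ.image c) (hJc ▸ hJk)
    rw [image_biUnion, hJc] at hWSJ
    -- only one row of `Fin k` lies outside the range of `r`
    calc _ ≤ #J + 1 := by simp only [Fintype.card_fin]; omega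
      _ ≤ _ := hWSJ
  refine det_submatrix_patternMatrix_ne_zero M r.injective c.injective σ.symm fun i ↦ ?_
  simpa using hσ (σ.symm i)

theorem exists_forall_det_submatrix_ne_zero
    (hrow : ∀ I : Finset (Fin k), I.Nonempty →
      n - k + #I ≤ #(I.biUnion fun i ↦ univ.filter fun j ↦ M i j = true))
    (hWS : ∀ J : Finset (Fin n), J.Nonempty → #J < k →
      #J + 1 ≤ #(J.biUnion fun j ↦ univ.filter fun i ↦ M i j = true)) :
    ∃ N : ℕ, ∀ (K : Type*) [CommRing K] [IsDomain K] [Fintype K], N ≤ Fintype.card K →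
      ∃ G : Matrix (Fin k) (Fin n) K, (∀ i j, M i j = false → G i j = 0) ∧
        (∀ c : Fin k ↪ Fin n, (G.submatrix id c).det ≠ 0) ∧
        ∀ (r : Fin (k - 1) ↪ Fin k) (c : Fin (k - 1) ↪ Fin n), (G.submatrix r c).det ≠ 0 := by
  let Minors := (Fin k ↪ Fin n) ⊕ (Fin (k - 1) ↪ Fin k) × (Fin (k - 1) ↪ Fin n)
  refine ⟨Fintype.card Minors * k + 1, fun K _ _ _ hN ↦ ?_⟩
  let minor : Minors → MvPolynomial (Fin k × Fin n) K :=
    Sum.elim (fun c ↦ ((patternMatrix M K).submatrix id c).det)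
      (fun rc ↦ ((patternMatrix M K).submatrix rc.1 rc.2).det)
  have hminor : ∀ t, minor t ≠ 0
    | .inl c => det_submatrix_id_patternMatrix_ne_zero M hrow c
    | .inr (r, c) => det_submatrix_patternMatrix_ne_zero_of_weakSecurity M hWS r c
  have hdeg : ∀ t, (minor t).totalDegree ≤ k
    | .inl c => (totalDegree_det_submatrix_patternMatrix_le M id c).trans_eq (Fintype.card_fin k)
    | .inr (r, c) => (totalDegree_det_submatrix_patternMatrix_le M r c).trans
        ((Fintype.card_fin _).trans_le (Nat.sub_le k 1))
  obtain ⟨x, hx⟩ := MvPolynomial.exists_forall_eval_ne_zero minor hminor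
    (calc ∑ t, (minor t).totalDegree ≤ ∑ _t : Minors, k := sum_le_sum fun t _ ↦ hdeg t
      _ < Fintype.card K := by simpa using hN)
  have hdet : ∀ {l} (r : Fin l → Fin k) (c : Fin l → Fin n),
      (((patternMatrix M K).map (MvPolynomial.eval x)).submatrix r c).det =
        MvPolynomial.eval x ((patternMatrix M K).submatrix r c).det := fun r c ↦ by
    rw [RingHom.map_det, RingHom.mapMatrix_apply, submatrix_map]
  exact ⟨(patternMatrix M K).map (MvPolynomial.eval x),
    fun i j h ↦ patternMatrix_map_eval_eq_zero M x h,
    fun c ↦ hdet id c ▸ hx (.inl c), fun r c ↦ hdet r c ▸ hx (.inr (r, c))⟩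

end Minors

end Matrix

theorem stmt17_general {k n m : ℕ} {F : Type} [Field F] [Fintype F]
    (f : MvPolynomial (Fin m) F) (hf : f ≠ 0)
    (M : Matrix (Fin k) (Fin n) Bool)
    (hrow : ∀ I : Finset (Fin k), I.Nonempty →
        n - k + I.card ≤
          (I.biUnion (fun i => Finset.univ.filter (fun j => M i j = true))).card)
    (hWS : ∀ J : Finset (Fin n), J.Nonempty → J.card < k →
        J.card + 1 ≤ (J.biUnion (fun j => Finset.univ.filter (fun i => M i j = true))).card) :
    -- (i) Schwartz–Zippel-type nonvanishing over a large enough extension field: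
    (∀ (F' : Type) [Field F'] [Fintype F'], ∀ φ : F →+* F',
        f.totalDegree < Fintype.card F' →
          ∃ g : Fin m → F', MvPolynomial.eval g (MvPolynomial.map φ f) ≠ 0) ∧
    -- (ii) existence of the desired encoding matrix over all large enough finite fields:
    (∃ N : ℕ, ∀ (F' : Type) [Field F'] [Fintype F'] [DecidableEq F'],
        N ≤ Fintype.card F' →
          ∃ G : Matrix (Fin k) (Fin n) F',
            (∀ i j, M i j = false → G i j = 0) ∧
            (∀ S : Finset (Fin n), ∀ hS : S.card = k,
              Matrix.det
                (G.submatrix id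
                  (fun i : Fin k => ((S.orderIsoOfFin hS i : {x // x ∈ S}) : Fin n))) ≠ 0) ∧
            (∀ E : Finset (Fin n), ∀ hE : E.card = k - 1,
              ∀ T : Finset (Fin k), ∀ hT : T.card = k - 1,
                Matrix.det
                  (G.submatrix
                    (fun i : Fin (k - 1) => ((T.orderIsoOfFin hT i : {x // x ∈ T}) : Fin k))
                    (fun j : Fin (k - 1) => ((E.orderIsoOfFin hE j : {x // x ∈ E}) : Fin n))) ≠ 0)) := by
  refine ⟨fun F' _ _ φ hdeg ↦ MvPolynomial.exists_eval_ne_zero_of_totalDegree_lt_card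
    ((MvPolynomial.map_injective φ φ.injective).ne hf |>.trans_eq (map_zero _))
    (by rwa [MvPolynomial.totalDegree_map_of_injective φ.injective]), ?_⟩
  obtain ⟨N, hN⟩ := exists_forall_det_submatrix_ne_zero M hrow hWS
  refine ⟨N, fun F' _ _ _ hcard ↦ ?_⟩
  obtain ⟨G, hG, hcols, hminors⟩ := hN F' hcard
  exact ⟨G, hG, fun S hS ↦ hcols (S.orderEmbOfFin hS).toEmbedding,
    fun E hE T hT ↦ hminors (T.orderEmbOfFin hT).toEmbedding (E.orderEmbOfFin hE).toEmbedding⟩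

/-- (i) A nonzero multivariate polynomial over F_q has a nonvanishing
assignment over any field extension F_{q'} whose cardinality exceeds its total degree.
(ii) Consequently, if a k×n binary matrix M satisfies the rank condition
|∪_{i∈I} supp(M_i)| ≥ n−k+|I| for all nonempty I and the Weak Security Condition, then
for all sufficiently large finite fields there is a matrix G fitting the zero pattern of
M whose every k×k submatrix is invertible and whose every (k−1)×(k−1) submatrix within
any k−1 columns is invertible. -/
theorem stmt17 {k n m : ℕ} (hkn : k ≤ n) {F : Type} [Field F] [Fintype F]
    (f : MvPolynomial (Fin m) F) (hf : f ≠ 0)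
    (M : Matrix (Fin k) (Fin n) Bool)
    (hrow : ∀ I : Finset (Fin k), I.Nonempty →
        n - k + I.card ≤
          (I.biUnion (fun i => Finset.univ.filter (fun j => M i j = true))).card)
    (hWS : ∀ J : Finset (Fin n), J.Nonempty → J.card < k →
        J.card + 1 ≤ (J.biUnion (fun j => Finset.univ.filter (fun i => M i j = true))).card) :
    -- (i) Schwartz–Zippel-type nonvanishing over a large enough extension field:
    (∀ (F' : Type) [Field F'] [Fintype F'], ∀ φ : F →+* F',
        f.totalDegree < Fintype.card F' →
          ∃ g : Fin m → F', MvPolynomial.eval g (MvPolynomial.map φ f) ≠ 0) ∧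
    -- (ii) existence of the desired encoding matrix over all large enough finite fields:
    (∃ N : ℕ, ∀ (F' : Type) [Field F'] [Fintype F'] [DecidableEq F'],
        N ≤ Fintype.card F' →
          ∃ G : Matrix (Fin k) (Fin n) F',
            (∀ i j, M i j = false → G i j = 0) ∧
            (∀ S : Finset (Fin n), ∀ hS : S.card = k,
              Matrix.det
                (G.submatrix id
                  (fun i : Fin k => ((S.orderIsoOfFin hS i : {x // x ∈ S}) : Fin n))) ≠ 0) ∧
            (∀ E : Finset (Fin n), ∀ hE : E.card = k - 1,
              ∀ T : Finset (Fin k), ∀ hT : T.card = k - 1,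
                Matrix.det
                  (G.submatrix
                    (fun i : Fin (k - 1) => ((T.orderIsoOfFin hT i : {x // x ∈ T}) : Fin k))
                    (fun j : Fin (k - 1) => ((E.orderIsoOfFin hE j : {x // x ∈ E}) : Fin n))) ≠ 0)) :=
  stmt17_general f hf M hrow hWS
end

section
/- Let R_1,…,R_k be subsets of [n] with n ≥ k. If there exists a nonempty J ⊊ [n] with |J| ≤ k−1 such that |{i ∈ [k] : J ∩ R_i ≠ ∅}| ≤ |J|, then there exists a nonempty proper I ⊊ [k] with |∪_{i∈I} R_i| ≤ n − k + |I|. -/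
/-!
Let `T` be the set of rows meeting `J`, so `#T ≤ #J`. Enlarge `T` to a set `S` of exactly `#J`
rows; since `1 ≤ #J < k`, its complement `I = Sᶜ` is nonempty and proper. Every row of `I` avoids
`J`, so `#(⋃_{i ∈ I} R i) ≤ n - #J = n - k + #I`.
-/

open Finset

theorem disjoint_biUnion_compl_of_filter_subset {ι α : Type*} [Fintype ι] [DecidableEq ι]
    [DecidableEq α] {R : ι → Finset α} {J : Finset α} {S : Finset ι}
    (hS : univ.filter (fun i => (J ∩ R i).Nonempty) ⊆ S) : Disjoint (Sᶜ.biUnion R) J := by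
  rw [disjoint_biUnion_left]
  intro i hi
  refine disjoint_comm.1 (not_not.1 fun hmeet => ?_)
  exact mem_compl.1 hi (hS (mem_filter.2 ⟨mem_univ i, not_disjoint_iff_nonempty_inter.1 hmeet⟩))

theorem stmt18_general {k n : ℕ} (R : Fin k → Finset (Fin n))
    (J : Finset (Fin n)) (hJne : J.Nonempty)
    (hJcard : J.card ≤ k - 1)
    (h : (Finset.univ.filter (fun i : Fin k => (J ∩ R i).Nonempty)).card ≤ J.card) :
    ∃ I : Finset (Fin k), I.Nonempty ∧ I ≠ Finset.univ ∧
      (I.biUnion R).card ≤ n - k + I.card := by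
  have hJpos : 0 < J.card := hJne.card_pos
  obtain ⟨S, hTS, -, hS⟩ :=
    exists_subsuperset_card_eq (subset_univ _) h (by rw [card_univ, Fintype.card_fin]; omega)
  have hdisj := disjoint_biUnion_compl_of_filter_subset hTS
  have hunion : (Sᶜ.biUnion R).card + J.card ≤ n := by
    simpa using (card_union_of_disjoint hdisj).symm.trans_le (card_le_univ _)
  have hIcard : Sᶜ.card = k - J.card := by rw [card_compl, Fintype.card_fin, hS]
  refine ⟨Sᶜ, ?_, (compl_ne_univ_iff_nonempty S).2 (card_pos.1 (hS ▸ hJpos)), ?_⟩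
  · exact card_pos.1 (by omega)
  · omega

/-- If some nonempty proper set J of at most k−1 columns touches at most
|J| of the sets R_i, then the row form of the Weak Security Condition fails. -/
theorem stmt18 {k n : ℕ} (hkn : k ≤ n) (R : Fin k → Finset (Fin n))
    (J : Finset (Fin n)) (hJne : J.Nonempty) (hJprop : J ≠ Finset.univ)
    (hJcard : J.card ≤ k - 1)
    (h : (Finset.univ.filter (fun i : Fin k => (J ∩ R i).Nonempty)).card ≤ J.card) :
    ∃ I : Finset (Fin k), I.Nonempty ∧ I ≠ Finset.univ ∧
      (I.biUnion R).card ≤ n - k + I.card :=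
  stmt18_general R J hJne hJcard h
end
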